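/- arXiv:1908.00832 — 2 statements merged into one kernel-verified Lean document; each statement's English description precedes it below -/
import Mathlib

section
/- Let A = {z ∈ ℂ : r < |z - x| < R} be an annulus with 0 < r < R ≤ ∞, and let γ₀ : [0,1] → A be a simple continuous curve connecting the outer and inner boundaries of A. Then for any simple continuous curve γ contained in A \ γ₀, the topological winding of γ around x satisfies |W(γ, x)| ≤ sup_{0 ≤ s₁ < s₂ ≤ 1} |W(γ₀[s₁,s₂], x)| + 4π. -/
/-!
Send a curve with a continuous argument lift `θ` to the plane curve `t ↦ (|γ t - x|, θ t)`.
If `θ` increased by more than `B + 2π` along `γ`, then for a suitable `k` the translate by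
`(0, 2πk)` of the image of an initial arc of `γ₀` lies angularly strictly between the endpoints of
the image of `γ`, while running radially from the inner circle beyond the largest radius of `γ`.
Two such crossing curves must meet (a two-dimensional Poincaré–Miranda theorem, proved by taking
a continuous logarithm of a nonvanishing map on a rectangle and following its argument around the
boundary), and a common point of the two images is a common point of `γ` and `γ₀`.
-/

open Complex Set Filter
open Real (Angle)
open scoped Real Interval Topology

theorem IsPreconnected.exists_abs_sub_lt_pi_div_two_of_cos_pos {X : Type*} [TopologicalSpace X]
    {S : Set X} (hS : IsPreconnected S) {g : X → ℝ} (hg : ContinuousOn g S) {φ : ℝ}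
    (hcos : ∀ p ∈ S, 0 < Real.cos (g p - φ)) :
    ∃ c : ℝ, (c : Angle) = φ ∧ ∀ p ∈ S, |g p - c| < π / 2 := by
  rcases S.eq_empty_or_nonempty with rfl | ⟨p₀, hp₀⟩
  · exact ⟨φ, rfl, by simp⟩
  set c := g p₀ - ((g p₀ - φ : ℝ) : Angle).toReal
  have hc : (c : Angle) = φ := by simp [c]
  have hcos_zero (y : ℝ) (hy : |y - c| = π / 2) : Real.cos (y - φ) = 0 := by
    obtain ⟨k, hk⟩ := Angle.angle_eq_iff_two_pi_dvd_sub.1 hc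
    rcases abs_eq (by positivity) |>.1 hy with h | h
    · exact Real.cos_eq_zero_iff.2 ⟨2 * k, by push_cast; linear_combination h + hk⟩
    · exact Real.cos_eq_zero_iff.2 ⟨2 * k - 1, by push_cast; linear_combination h + hk⟩
  refine ⟨c, hc, fun p hp => not_le.1 fun hfar => ?_⟩
  have hp₀c : |g p₀ - c| < π / 2 := by
    rw [sub_sub_cancel, ← Angle.cos_pos_iff_abs_toReal_lt_pi_div_two, Angle.cos_coe]
    exact hcos p₀ hp₀
  rw [abs_lt] at hp₀c
  obtain ⟨q, hq, hgq⟩ : ∃ q ∈ S, |g q - c| = π / 2 := by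
    rcases le_abs'.1 hfar with hbelow | habove
    · obtain ⟨q, hq, hgq⟩ := hS.intermediate_value hp hp₀ hg
        (show c - π / 2 ∈ Icc (g p) (g p₀) from ⟨by linarith, by linarith⟩)
      exact ⟨q, hq, by rw [hgq, sub_sub_cancel_left, abs_neg, abs_of_pos (by positivity)]⟩
    · obtain ⟨q, hq, hgq⟩ := hS.intermediate_value hp₀ hp hg
        (show c + π / 2 ∈ Icc (g p₀) (g p) from ⟨by linarith, by linarith⟩)
      exact ⟨q, hq, by rw [hgq, add_sub_cancel_left, abs_of_pos (by positivity)]⟩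
  exact (hcos q hq).ne' (hcos_zero _ hgq)

open Classical in
theorem Convex.exists_continuousOn_exp_eq {E : Type*} [AddCommGroup E] [Module ℝ E]
    [TopologicalSpace E] [IsTopologicalAddGroup E] [ContinuousSMul ℝ E] [LocallyConvexSpace ℝ E]
    {S : Set E} (hS : Convex ℝ S) {F : E → ℂ} (hF : ContinuousOn F S)
    (hF0 : ∀ p ∈ S, F p ≠ 0) : ∃ G : E → ℂ, ContinuousOn G S ∧ ∀ p ∈ S, exp (G p) = F p := by
  rcases S.eq_empty_or_nonempty with rfl | hne
  · exact ⟨0, continuousOn_empty _, by simp⟩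
  have := hS.contractibleSpace hne
  have := hS.locallyPathConnectedSpace
  obtain ⟨p₀, hp₀⟩ := hne
  obtain ⟨L, ⟨-, hL⟩, -⟩ := isCoveringMapOn_exp.existsUnique_continuousMap_lifts
    ⟨S.domRestrict F, hF.domRestrict⟩ (a₀ := ⟨p₀, hp₀⟩) (exp_log (hF0 p₀ hp₀))
    fun p => hF0 p p.2
  refine ⟨fun p => if h : p ∈ S then L ⟨p, h⟩ else 0, ?_, fun p hp => ?_⟩
  · rw [continuousOn_iff_continuous_domRestrict]
    convert L.continuous with p
    simp
  · simpa [hp] using congrFun hL ⟨p, hp⟩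

theorem sub_eq_pi_div_two_of_abs_sub_lt {y c₁ c₂ φ₁ φ₂ : ℝ}
    (hφ : ((φ₁ - φ₂ : ℝ) : Angle) = (π / 2 : ℝ)) (h₁ : (c₁ : Angle) = φ₁)
    (h₂ : (c₂ : Angle) = φ₂) (hy₁ : |y - c₁| < π / 2) (hy₂ : |y - c₂| < π / 2) :
    c₁ - c₂ = π / 2 := by
  rw [abs_lt] at hy₁ hy₂
  have hmem : -π < c₁ - c₂ ∧ c₁ - c₂ ≤ π := ⟨by linarith, by linarith⟩
  rw [← Angle.toReal_coe_eq_self_iff.2 hmem, Angle.coe_sub, h₁, h₂, ← Angle.coe_sub, hφ,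
    Angle.toReal_pi_div_two]

theorem exists_eq_zero_of_signs_on_rectangle_boundary {a b c d : ℝ} {F : ℝ × ℝ → ℂ}
    (hF : ContinuousOn F ([[a, b]] ×ˢ [[c, d]]))
    (hleft : ∀ t ∈ [[c, d]], 0 < (F (a, t)).re) (hright : ∀ t ∈ [[c, d]], (F (b, t)).re < 0)
    (hbot : ∀ s ∈ [[a, b]], (F (s, c)).im < 0) (htop : ∀ s ∈ [[a, b]], 0 < (F (s, d)).im) :
    ∃ p ∈ [[a, b]] ×ˢ [[c, d]], F p = 0 := by
  by_contra! hF0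
  obtain ⟨G, hG, hGF⟩ :=
    ((convex_uIcc a b).prod (convex_uIcc c d)).exists_continuousOn_exp_eq hF hF0
  have hre (p) (hp : p ∈ [[a, b]] ×ˢ [[c, d]]) :
      (F p).re = Real.exp (G p).re * Real.cos (G p).im := by
    rw [← hGF p hp, exp_re]
  have him (p) (hp : p ∈ [[a, b]] ×ˢ [[c, d]]) :
      (F p).im = Real.exp (G p).re * Real.sin (G p).im := by
    rw [← hGF p hp, exp_im]
  have side (S : Set (ℝ × ℝ)) (hS : S ⊆ [[a, b]] ×ˢ [[c, d]]) (hSc : IsPreconnected S) (φ : ℝ)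
      (hcos : ∀ p ∈ S, 0 < Real.cos ((G p).im - φ)) :
      ∃ c : ℝ, (c : Angle) = φ ∧ ∀ p ∈ S, |(G p).im - c| < π / 2 :=
    hSc.exists_abs_sub_lt_pi_div_two_of_cos_pos (continuous_im.comp_continuousOn (hG.mono hS))
      hcos
  obtain ⟨cl, hcl, hl⟩ := side ({a} ×ˢ [[c, d]]) (prod_mono (by simp) subset_rfl)
    (isPreconnected_singleton.prod isPreconnected_uIcc) 0 <| by
      rintro ⟨s, t⟩ ⟨rfl, ht⟩
      have := hleft t ht
      rw [hre _ ⟨left_mem_uIcc, ht⟩] at this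
      simpa using pos_of_mul_pos_right this (Real.exp_pos _).le
  obtain ⟨cb, hcb, hb⟩ := side ([[a, b]] ×ˢ {c}) (prod_mono subset_rfl (by simp))
    (isPreconnected_uIcc.prod isPreconnected_singleton) (-(π / 2)) <| by
      rintro ⟨s, t⟩ ⟨hs, rfl⟩
      have := hbot s hs
      rw [him _ ⟨hs, left_mem_uIcc⟩] at this
      simpa [Real.cos_add_pi_div_two] using neg_of_mul_neg_right this (Real.exp_pos _).le
  obtain ⟨cr, hcr, hr⟩ := side ({b} ×ˢ [[c, d]]) (prod_mono (by simp) subset_rfl)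
    (isPreconnected_singleton.prod isPreconnected_uIcc) π <| by
      rintro ⟨s, t⟩ ⟨rfl, ht⟩
      have := hright t ht
      rw [hre _ ⟨right_mem_uIcc, ht⟩] at this
      simpa [Real.cos_sub_pi] using neg_of_mul_neg_right this (Real.exp_pos _).le
  obtain ⟨ct, hct, ht⟩ := side ([[a, b]] ×ˢ {d}) (prod_mono subset_rfl (by simp))
    (isPreconnected_uIcc.prod isPreconnected_singleton) (π / 2) <| by
      rintro ⟨s, t⟩ ⟨hs, rfl⟩
      have := htop s hs
      rw [him _ ⟨hs, right_mem_uIcc⟩] at this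
      simpa [Real.cos_sub_pi_div_two] using pos_of_mul_pos_right this (Real.exp_pos _).le
  -- At each corner the argument turns by exactly `π / 2`, yet the four turns must telescope to 0.
  have hlb := sub_eq_pi_div_two_of_abs_sub_lt (by norm_num) hcl hcb
    (hl (a, c) ⟨rfl, left_mem_uIcc⟩) (hb (a, c) ⟨left_mem_uIcc, rfl⟩)
  have hbr := sub_eq_pi_div_two_of_abs_sub_lt
    (Angle.angle_eq_iff_two_pi_dvd_sub.2 ⟨-1, by push_cast; ring⟩) hcb hcr
    (hb (b, c) ⟨right_mem_uIcc, rfl⟩) (hr (b, c) ⟨rfl, left_mem_uIcc⟩)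
  have hrt := sub_eq_pi_div_two_of_abs_sub_lt (by ring_nf) hcr hct
    (hr (b, d) ⟨rfl, right_mem_uIcc⟩) (ht (b, d) ⟨right_mem_uIcc, rfl⟩)
  have htl := sub_eq_pi_div_two_of_abs_sub_lt (by norm_num) hct hcl
    (ht (a, d) ⟨left_mem_uIcc, rfl⟩) (hl (a, d) ⟨rfl, right_mem_uIcc⟩)
  linarith [Real.pi_pos]

theorem exists_eq_of_crossing {a b c d : ℝ} {u v : ℝ → ℂ} (hu : ContinuousOn u [[a, b]])
    (hv : ContinuousOn v [[c, d]]) (hleft : ∀ t ∈ [[c, d]], (u a).re < (v t).re)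
    (hright : ∀ t ∈ [[c, d]], (v t).re < (u b).re) (hbot : ∀ s ∈ [[a, b]], (v c).im < (u s).im)
    (htop : ∀ s ∈ [[a, b]], (u s).im < (v d).im) :
    ∃ s ∈ [[a, b]], ∃ t ∈ [[c, d]], u s = v t := by
  obtain ⟨⟨s, t⟩, ⟨hs, ht⟩, hst⟩ := exists_eq_zero_of_signs_on_rectangle_boundary
    (F := fun p => v p.2 - u p.1)
    ((hv.comp continuousOn_snd fun p hp => hp.2).sub (hu.comp continuousOn_fst fun p hp => hp.1))
    (fun t ht => by simpa using hleft t ht) (fun t ht => by simpa using hright t ht)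
    (fun s hs => by simpa using hbot s hs) (fun s hs => by simpa using htop s hs)
  exact ⟨s, hs, t, ht, (sub_eq_zero.1 hst).symm⟩

theorem Complex.eq_of_norm_eq_of_arg_lift {z w : ℂ} {θ φ : ℝ} (hz : z = ‖z‖ * exp (θ * I))
    (hw : w = ‖w‖ * exp (φ * I)) (hnorm : ‖z‖ = ‖w‖) (k : ℤ) (hθ : θ = φ + 2 * π * k) :
    z = w := by
  have hexp : exp (θ * I) = exp (φ * I) :=
    exp_eq_exp_iff_exists_int.2 ⟨k, by rw [hθ]; push_cast; ring⟩
  rw [hz, hw, hnorm, hexp]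

theorem exists_two_pi_mul_int_mem_Ioo {x y : ℝ} (h : x + 2 * π < y) :
    ∃ k : ℤ, x < 2 * π * k ∧ 2 * π * k < y := by
  refine ⟨⌊x / (2 * π)⌋ + 1, ?_, ?_⟩
  · rw [← div_lt_iff₀' Real.two_pi_pos]
    push_cast
    exact Int.lt_floor_add_one _
  · have := mul_le_mul_of_nonneg_left (Int.floor_le (x / (2 * π))) Real.two_pi_pos.le
    rw [mul_div_cancel₀ _ Real.two_pi_pos.ne'] at this
    push_cast
    linarith

theorem winding_le_add_two_pi_of_avoids_crosscut {x : ℂ} {r : ℝ} {R : EReal} {γ₀ γ : ℝ → ℂ}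
    {θ₀ θ : ℝ → ℝ} {B t₀ t₁ : ℝ}
    (h₀cont : ContinuousOn γ₀ (Ico 0 1)) (h₀inner : dist (γ₀ 0) x = r)
    (h₀outer : Tendsto (fun t => ((dist (γ₀ t) x : ℝ) : EReal)) (𝓝[<] 1) (𝓝 R))
    (hθ₀cont : ContinuousOn θ₀ (Ico 0 1))
    (hθ₀ : ∀ t ∈ Ico (0 : ℝ) 1, γ₀ t - x = (‖γ₀ t - x‖ : ℂ) * exp (θ₀ t * I))
    (hB : ∀ s₁ s₂, s₁ ∈ Ico (0 : ℝ) 1 → s₂ ∈ Ico (0 : ℝ) 1 → s₁ ≤ s₂ → |θ₀ s₂ - θ₀ s₁| ≤ B)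
    (hcont : ContinuousOn γ [[t₀, t₁]])
    (hann : ∀ t ∈ [[t₀, t₁]], r < dist (γ t) x ∧ ((dist (γ t) x : ℝ) : EReal) < R)
    (hsep : ∀ t ∈ [[t₀, t₁]], γ t ∉ γ₀ '' Ico 0 1) (hθcont : ContinuousOn θ [[t₀, t₁]])
    (hθ : ∀ t ∈ [[t₀, t₁]], γ t - x = (‖γ t - x‖ : ℂ) * exp (θ t * I)) :
    θ t₁ - θ t₀ ≤ B + 2 * π := by
  have hρcont : ContinuousOn (fun t => dist (γ t) x) [[t₀, t₁]] := by fun_prop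
  obtain ⟨tmax, htmax, hmax⟩ := isCompact_uIcc.exists_isMaxOn nonempty_uIcc hρcont
  obtain ⟨s₂, hs₂R, hs₂⟩ := ((h₀outer.eventually_const_lt (hann tmax htmax).2).and
    (Ioo_mem_nhdsLT zero_lt_one)).exists
  have hsub : [[0, s₂]] ⊆ Ico 0 1 := by
    rw [uIcc_of_le hs₂.1.le]
    exact Icc_subset_Ico_right hs₂.2
  obtain ⟨smin, hsmin, hmin⟩ := isCompact_uIcc.exists_isMinOn nonempty_uIcc (hθ₀cont.mono hsub)
  have hband (s) (hs : s ∈ [[0, s₂]]) : θ₀ s ≤ θ₀ smin + B := by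
    rcases le_total smin s with h | h
    · linarith [(abs_le.1 (hB smin s (hsub hsmin) (hsub hs) h)).2]
    · linarith [(abs_le.1 (hB s smin (hsub hs) (hsub hsmin) h)).1]
  by_contra! hwind
  have hre (a b : ℝ) : ((a : ℂ) + b * I).re = a := by simp
  have him (a b : ℝ) : ((a : ℂ) + b * I).im = b := by simp
  obtain ⟨K, hK₀, hK₁⟩ :=
    exists_two_pi_mul_int_mem_Ioo (x := θ t₀ - θ₀ smin) (y := θ t₁ - θ₀ smin - B) (by linarith)
  obtain ⟨s, hs, t, ht, hst⟩ := exists_eq_of_crossing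
    (u := fun s => dist (γ₀ s) x + (θ₀ s + 2 * π * K : ℝ) * I)
    (v := fun t => dist (γ t) x + θ t * I) (a := 0) (b := s₂) (c := t₀) (d := t₁)
    (by have := h₀cont.mono hsub; have := hθ₀cont.mono hsub; fun_prop) (by fun_prop)
    (fun t ht => by simpa only [hre, h₀inner] using (hann t ht).1)
    (fun t ht => by simpa only [hre] using (hmax ht).trans_lt (EReal.coe_lt_coe_iff.1 hs₂R))
    (fun s hs => by simp only [him]; linarith [isMinOn_iff.1 hmin s hs])
    (fun s hs => by simp only [him]; linarith [hband s hs])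
  simp only [Complex.ext_iff, hre, him] at hst
  refine hsep t ht ⟨s, hsub hs, sub_left_injective (b := x) ?_⟩
  exact Complex.eq_of_norm_eq_of_arg_lift (hθ₀ s (hsub hs)) (hθ t ht)
    (by simpa only [dist_eq_norm] using hst.1) (-K) (by push_cast; linarith)

theorem winding_in_annulus_general (x : ℂ) (r : ℝ) (R : EReal)
    (A : Set ℂ)
    (hA : A = {z : ℂ | (r : EReal) < ((dist z x : ℝ) : EReal) ∧
      ((dist z x : ℝ) : EReal) < R})
    -- the simple curve γ₀ connecting the inner and outer boundaries
    (γ₀ : ℝ → ℂ)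
    (h₀cont : ContinuousOn γ₀ (Ico 0 1))
    (h₀inner : dist (γ₀ 0) x = r)
    (h₀outer : Tendsto (fun t => ((dist (γ₀ t) x : ℝ) : EReal))
      (nhdsWithin 1 (Iio 1)) (nhds R))
    -- a continuous argument lift along γ₀
    (θ₀ : ℝ → ℝ) (hθ₀cont : ContinuousOn θ₀ (Ico 0 1))
    (hθ₀ : ∀ t ∈ Ico (0:ℝ) 1, γ₀ t - x =
      (‖γ₀ t - x‖ : ℂ) * Complex.exp ((θ₀ t : ℂ) * Complex.I))
    -- the simple curve γ in A \ γ₀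
    (γ : ℝ → ℂ)
    (hcont : ContinuousOn γ (Icc 0 1))
    (hmem : ∀ t ∈ Icc (0:ℝ) 1, γ t ∈ A \ (γ₀ '' Ico 0 1))
    -- a continuous argument lift along γ
    (θ : ℝ → ℝ) (hθcont : ContinuousOn θ (Icc 0 1))
    (hθ : ∀ t ∈ Icc (0:ℝ) 1, γ t - x =
      (‖γ t - x‖ : ℂ) * Complex.exp ((θ t : ℂ) * Complex.I))
    -- B bounds the winding of every subarc of γ₀
    (B : ℝ)
    (hB : ∀ s₁ s₂, s₁ ∈ Ico (0:ℝ) 1 → s₂ ∈ Ico (0:ℝ) 1 → s₁ ≤ s₂ →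
      |θ₀ s₂ - θ₀ s₁| ≤ B) :
    |θ 1 - θ 0| ≤ B + 4 * Real.pi := by
  have hann (t) (ht : t ∈ Icc (0:ℝ) 1) : r < dist (γ t) x ∧ ((dist (γ t) x : ℝ) : EReal) < R := by
    have h := (hmem t ht).1
    rw [hA] at h
    exact ⟨EReal.coe_lt_coe_iff.1 h.1, h.2⟩
  have hwind (t₀ t₁ : ℝ) (h : [[t₀, t₁]] = Icc 0 1) : θ t₁ - θ t₀ ≤ B + 2 * π := by
    rw [← h] at hcont hann hmem hθcont hθ
    exact winding_le_add_two_pi_of_avoids_crosscut h₀cont h₀inner h₀outer hθ₀cont hθ₀ hB hcont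
      hann (fun t ht => (hmem t ht).2) hθcont hθ
  have h01 := hwind 0 1 (uIcc_of_le zero_le_one)
  have h10 := hwind 1 0 (uIcc_of_ge zero_le_one)
  rw [abs_le]
  constructor <;> linarith [Real.pi_pos]

/-- Let `A = {z : r < |z - x| < R}` be an annulus
(`0 < r < R ≤ ∞`; for `R = ∞` the annulus is the complement of the closed
ball), let `γ₀` be a simple continuous curve in `A` connecting the inner and
outer boundaries of `A`, and let `γ` be a simple continuous curve contained in
`A \ γ₀`.  If `B` bounds the topological winding `|W(γ₀[s₁,s₂], x)|` of every
subarc of `γ₀`, then the topological winding of `γ` around `x` satisfies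
`|W(γ, x)| ≤ B + 4π`.  Windings are expressed through continuous lifts
`θ₀, θ` of the argument of `· - x` along the curves. -/
theorem winding_in_annulus (x : ℂ) (r : ℝ) (R : EReal)
    (hr : 0 < r) (hrR : (r : EReal) < R)
    (A : Set ℂ)
    (hA : A = {z : ℂ | (r : EReal) < ((dist z x : ℝ) : EReal) ∧
      ((dist z x : ℝ) : EReal) < R})
    -- the simple curve γ₀ connecting the inner and outer boundaries
    (γ₀ : ℝ → ℂ)
    (h₀cont : ContinuousOn γ₀ (Ico 0 1))
    (h₀inj : InjOn γ₀ (Ico 0 1))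
    (h₀mem : ∀ t ∈ Ioo (0:ℝ) 1, γ₀ t ∈ A)
    (h₀inner : dist (γ₀ 0) x = r)
    (h₀outer : Tendsto (fun t => ((dist (γ₀ t) x : ℝ) : EReal))
      (nhdsWithin 1 (Iio 1)) (nhds R))
    -- a continuous argument lift along γ₀
    (θ₀ : ℝ → ℝ) (hθ₀cont : ContinuousOn θ₀ (Ico 0 1))
    (hθ₀ : ∀ t ∈ Ico (0:ℝ) 1, γ₀ t - x =
      (‖γ₀ t - x‖ : ℂ) * Complex.exp ((θ₀ t : ℂ) * Complex.I))
    -- the simple curve γ in A \ γ₀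
    (γ : ℝ → ℂ)
    (hcont : ContinuousOn γ (Icc 0 1))
    (hinj : InjOn γ (Icc 0 1))
    (hmem : ∀ t ∈ Icc (0:ℝ) 1, γ t ∈ A \ (γ₀ '' Ico 0 1))
    -- a continuous argument lift along γ
    (θ : ℝ → ℝ) (hθcont : ContinuousOn θ (Icc 0 1))
    (hθ : ∀ t ∈ Icc (0:ℝ) 1, γ t - x =
      (‖γ t - x‖ : ℂ) * Complex.exp ((θ t : ℂ) * Complex.I))
    -- B bounds the winding of every subarc of γ₀
    (B : ℝ)
    (hB : ∀ s₁ s₂, s₁ ∈ Ico (0:ℝ) 1 → s₂ ∈ Ico (0:ℝ) 1 → s₁ ≤ s₂ →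
      |θ₀ s₂ - θ₀ s₁| ≤ B) :
    |θ 1 - θ 0| ≤ B + 4 * Real.pi :=
  winding_in_annulus_general x r R A hA γ₀ h₀cont h₀inner h₀outer θ₀ hθ₀cont hθ₀ γ hcont hmem θ
    hθcont hθ B hB
end

section
/- Let D ⊂ ℂ be a domain, γ ⊂ D̄ a simple piecewise-smooth curve with smooth endpoints, and ψ a conformal (injective holomorphic) map on D. Then the change in intrinsic winding under ψ is W_i(ψ(γ)) - W_i(γ) = arg(ψ'(γ(1))) - arg(ψ'(γ(0))), where arg is any continuous branch of the argument on ψ'(D). -/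
open Complex Set Metric Filter

/-!
At every time `t` the three polar angles satisfy `Θ t ≡ θ t + a (ψ'(γ t)) (mod 2π)`, because the
tangent of `ψ ∘ γ` is the product `ψ'(γ t) · γ'(t)`. So `Θ - θ - a ∘ ψ' ∘ γ` is a continuous
function on `[0, 1]` with values in the discrete set `2πℤ`, hence constant; comparing its values
at `0` and `1` gives the claim.
-/

theorem Complex.arg_coe_angle_eq_of_eq_norm_mul_exp {z : ℂ} {α : ℝ} (hz : z ≠ 0)
    (h : z = ‖z‖ * exp (α * I)) : (arg z : Real.Angle) = α := by
  rw [h, exp_mul_I, ← ofReal_cos, ← ofReal_sin, ← Real.Angle.cos_coe, ← Real.Angle.sin_coe,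
    arg_mul_cos_add_sin_mul_I_coe_angle (norm_pos_iff.2 hz)]

theorem Complex.coe_angle_eq_add_of_polar_mul {w z : ℂ} {α β γ : ℝ} (hw : w ≠ 0) (hz : z ≠ 0)
    (hα : w = ‖w‖ * exp (α * I)) (hβ : z = ‖z‖ * exp (β * I))
    (hγ : w * z = ‖w * z‖ * exp (γ * I)) : (γ : Real.Angle) = α + β :=
  calc (γ : Real.Angle) = arg (w * z) :=
        (arg_coe_angle_eq_of_eq_norm_mul_exp (mul_ne_zero hw hz) hγ).symm
    _ = arg w + arg z := arg_mul_coe_angle hw hz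
    _ = α + β := by
        rw [arg_coe_angle_eq_of_eq_norm_mul_exp hw hα, arg_coe_angle_eq_of_eq_norm_mul_exp hz hβ]

theorem IsPreconnected.eq_of_coe_angle_eq_zero {X : Type*} [TopologicalSpace X] {S : Set X}
    (hS : IsPreconnected S) {f : X → ℝ} (hf : ContinuousOn f S)
    (h : ∀ t ∈ S, (f t : Real.Angle) = 0) {x y : X} (hx : x ∈ S) (hy : y ∈ S) : f x = f y :=
  hS.constant_of_mapsTo (T := AddSubgroup.zmultiples (2 * Real.pi))
    (isDiscrete_iff_discreteTopology.2
      (inferInstanceAs (DiscreteTopology (AddSubgroup.zmultiples (2 * Real.pi))))) hf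
    (fun t ht => QuotientAddGroup.eq_zero_iff _ |>.1 (h t ht)) hx hy

theorem winding_change_conformal_general
    (D : Set ℂ) (hD : IsOpen D)
    (ψ : ℂ → ℂ) (hψ : DifferentiableOn ℂ ψ D)
    (hψ' : ∀ z ∈ D, deriv ψ z ≠ 0)
    (γ g : ℝ → ℂ)
    (hmem : ∀ t ∈ Icc (0:ℝ) 1, γ t ∈ D)
    (hderiv : ∀ t ∈ Icc (0:ℝ) 1, HasDerivAt γ (g t) t)
    (hgne : ∀ t ∈ Icc (0:ℝ) 1, g t ≠ 0)
    -- continuous argument lift along the tangent of γ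
    (θ : ℝ → ℝ) (hθc : ContinuousOn θ (Icc 0 1))
    (hθ : ∀ t ∈ Icc (0:ℝ) 1, g t =
      (‖g t‖ : ℂ) * Complex.exp ((θ t : ℂ) * Complex.I))
    -- continuous argument lift along the tangent of ψ ∘ γ
    (Θ : ℝ → ℝ) (hΘc : ContinuousOn Θ (Icc 0 1))
    (hΘ : ∀ t ∈ Icc (0:ℝ) 1, deriv ψ (γ t) * g t =
      (‖deriv ψ (γ t) * g t‖ : ℂ) * Complex.exp ((Θ t : ℂ) * Complex.I))
    -- a continuous branch of the argument on ψ'(D)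
    (a : ℂ → ℝ) (ha_cont : ContinuousOn a ((deriv ψ) '' D))
    (ha : ∀ w ∈ (deriv ψ) '' D, w =
      (‖w‖ : ℂ) * Complex.exp ((a w : ℂ) * Complex.I)) :
    (Θ 1 - Θ 0) - (θ 1 - θ 0) = a (deriv ψ (γ 1)) - a (deriv ψ (γ 0)) := by
  have hγ : ContinuousOn γ (Icc 0 1) := fun t ht => (hderiv t ht).continuousAt.continuousWithinAt
  have hψ'c : ContinuousOn (deriv ψ) D := (hψ.analyticOnNhd hD).deriv.continuousOn
  have hmaps : MapsTo (fun t => deriv ψ (γ t)) (Icc 0 1) (deriv ψ '' D) :=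
    fun t ht => mem_image_of_mem _ (hmem t ht)
  have hcont : ContinuousOn (fun t => Θ t - θ t - a (deriv ψ (γ t))) (Icc 0 1) :=
    (hΘc.sub hθc).sub (ha_cont.comp (hψ'c.comp hγ hmem) hmaps)
  have hangle : ∀ t ∈ Icc (0:ℝ) 1, ((Θ t - θ t - a (deriv ψ (γ t)) : ℝ) : Real.Angle) = 0 := by
    intro t ht
    have hpolar := coe_angle_eq_add_of_polar_mul (hψ' _ (hmem t ht)) (hgne t ht) (ha _ (hmaps ht))
      (hθ t ht) (hΘ t ht)
    rw [Real.Angle.coe_sub, Real.Angle.coe_sub, hpolar]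
    abel
  have hends := isPreconnected_Icc.eq_of_coe_angle_eq_zero hcont hangle
    (right_mem_Icc.2 zero_le_one) (left_mem_Icc.2 zero_le_one)
  linarith

/-- Let `D ⊂ ℂ` be a domain, `γ` a simple piecewise-smooth
curve in `D̄` (with smooth endpoints; here parametrised in `D` with continuous
nonvanishing derivative `g`), and `ψ` a conformal (injective holomorphic) map
on `D` with nonvanishing derivative.  Given continuous argument lifts `θ` of
the tangent `g` of `γ`, `Θ` of the tangent `deriv ψ (γ t) · g t` of `ψ ∘ γ`,
and a continuous branch `a` of the argument on `ψ'(D)`, the change of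
intrinsic winding is
`Wᵢ(ψ(γ)) - Wᵢ(γ) = a(ψ'(γ(1))) - a(ψ'(γ(0)))`. -/
theorem winding_change_conformal
    (D : Set ℂ) (hD : IsOpen D) (hDconn : IsConnected D)
    (ψ : ℂ → ℂ) (hψ : DifferentiableOn ℂ ψ D) (hψinj : InjOn ψ D)
    (hψ' : ∀ z ∈ D, deriv ψ z ≠ 0)
    (γ g : ℝ → ℂ)
    (hmem : ∀ t ∈ Icc (0:ℝ) 1, γ t ∈ D)
    (hderiv : ∀ t ∈ Icc (0:ℝ) 1, HasDerivAt γ (g t) t)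
    (hg : ContinuousOn g (Icc 0 1))
    (hgne : ∀ t ∈ Icc (0:ℝ) 1, g t ≠ 0)
    (hinj : InjOn γ (Icc 0 1))
    -- continuous argument lift along the tangent of γ
    (θ : ℝ → ℝ) (hθc : ContinuousOn θ (Icc 0 1))
    (hθ : ∀ t ∈ Icc (0:ℝ) 1, g t =
      (‖g t‖ : ℂ) * Complex.exp ((θ t : ℂ) * Complex.I))
    -- continuous argument lift along the tangent of ψ ∘ γ
    (Θ : ℝ → ℝ) (hΘc : ContinuousOn Θ (Icc 0 1))
    (hΘ : ∀ t ∈ Icc (0:ℝ) 1, deriv ψ (γ t) * g t =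
      (‖deriv ψ (γ t) * g t‖ : ℂ) * Complex.exp ((Θ t : ℂ) * Complex.I))
    -- a continuous branch of the argument on ψ'(D)
    (a : ℂ → ℝ) (ha_cont : ContinuousOn a ((deriv ψ) '' D))
    (ha : ∀ w ∈ (deriv ψ) '' D, w =
      (‖w‖ : ℂ) * Complex.exp ((a w : ℂ) * Complex.I)) :
    (Θ 1 - Θ 0) - (θ 1 - θ 0) = a (deriv ψ (γ 1)) - a (deriv ψ (γ 0)) :=
  winding_change_conformal_general D hD ψ hψ hψ' γ g hmem hderiv hgne θ hθc hθ Θ hΘc hΘ a ha_cont ha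
end
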